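/- The Red Ploc reduction is derivable from the τ-Ploc SOS rule: for processes P₁, P₂, Q with no relevant private names and z not free in P₂ or Q, m_A[n_B[ploc(x).P₁ | P₂] | Q] has a τ-transition to m_A[n_B[P₁{x ← m_A} | P₂] | Q]. -/

import Mathlib

set_option autoImplicit true
set_option linter.unusedVariables false
open Classical

/-- Ambient names tagged with a set of ports. -/
structure AmbName where
  name : ℕ
  ports : Set ℕ

/-- Capabilities (and values) of CMC. -/
inductive Cap where
  | var : ℕ → Cap
  | inn : AmbName → Cap
  | out : AmbName → Cap
  | eps : Cap
  | seq : Cap → Cap → Cap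
  | ploc : ℕ → Cap
  | sloc : ℕ → Cap
  | name : AmbName → Cap

/-- CMC processes. -/
inductive Proc where
  | zero : Proc
  | cap : Cap → Proc → Proc
  | input : ℕ → ℕ → Proc → Proc
  | output : ℕ → Cap → Proc → Proc
  | tauP : Proc → Proc
  | amb : AmbName → Proc → Proc
  | sum : Proc → Proc → Proc
  | par : Proc → Proc → Proc
  | resAmb : AmbName → Proc → Proc
  | resPort : ℕ → Proc → Proc

def Cap.subst : Cap → ℕ → Cap → Cap
  | .var y, x, c => if y = x then c else .var y
  | .seq c1 c2, x, c => .seq (c1.subst x c) (c2.subst x c)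
  | k, _, _ => k

def Proc.subst : Proc → ℕ → Cap → Proc
  | .zero, _, _ => .zero
  | .cap c P, x, v => .cap (c.subst x v) (P.subst x v)
  | .input a z P, x, v => if z = x then .input a z P else .input a z (P.subst x v)
  | .output a w P, x, v => .output a (w.subst x v) (P.subst x v)
  | .tauP P, x, v => .tauP (P.subst x v)
  | .amb m P, x, v => .amb m (P.subst x v)
  | .sum P Q, x, v => .sum (P.subst x v) (Q.subst x v)
  | .par P Q, x, v => .par (P.subst x v) (Q.subst x v)
  | .resAmb m P, x, v => .resAmb m (P.subst x v)
  | .resPort l P, x, v => .resPort l (P.subst x v)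

/-- Free names (ambient names on the left, port names on the right). -/
def Cap.fn : Cap → Set (AmbName ⊕ ℕ)
  | .var _ => ∅
  | .inn n => {Sum.inl n}
  | .out n => {Sum.inl n}
  | .eps => ∅
  | .seq c1 c2 => c1.fn ∪ c2.fn
  | .ploc _ => ∅
  | .sloc _ => ∅
  | .name n => {Sum.inl n}

def Proc.fn : Proc → Set (AmbName ⊕ ℕ)
  | .zero => ∅
  | .cap c P => c.fn ∪ P.fn
  | .input a _ P => insert (Sum.inr a) P.fn
  | .output a v P => insert (Sum.inr a) (v.fn ∪ P.fn)
  | .tauP P => P.fn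
  | .amb m P => insert (Sum.inl m) P.fn
  | .sum P Q => P.fn ∪ Q.fn
  | .par P Q => P.fn ∪ Q.fn
  | .resAmb m P => P.fn \ {Sum.inl m}
  | .resPort l P => P.fn \ {Sum.inr l}

def Cap.vars : Cap → Set ℕ
  | .var x => {x}
  | .seq c1 c2 => c1.vars ∪ c2.vars
  | .ploc x => {x}
  | .sloc x => {x}
  | _ => ∅

def Proc.vars : Proc → Set ℕ
  | .zero => ∅
  | .cap c P => c.vars ∪ P.vars
  | .input _ z P => insert z P.vars
  | .output _ v P => v.vars ∪ P.vars
  | .tauP P => P.vars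
  | .amb _ P => P.vars
  | .sum P Q => P.vars ∪ Q.vars
  | .par P Q => P.vars ∪ Q.vars
  | .resAmb _ P => P.vars
  | .resPort _ P => P.vars

/-- Iterated ambient-name restriction (ν m̃)P. -/
def resList (ms : List AmbName) (P : Proc) : Proc := ms.foldr Proc.resAmb P

/-- Structural congruence: the least equivalence relation preserved by
restriction, parallel, ambient, capability-prefix and action-prefix,
satisfying the structural axioms of CMC. -/
inductive SC : Proc → Proc → Prop
  | refl (P) : SC P P
  | symm : SC P Q → SC Q P
  | trans : SC P Q → SC Q R → SC P R
  | capC : SC P Q → SC (.cap c P) (.cap c Q)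
  | inputC : SC P Q → SC (.input a z P) (.input a z Q)
  | outputC : SC P Q → SC (.output a v P) (.output a v Q)
  | tauC : SC P Q → SC (.tauP P) (.tauP Q)
  | ambC : SC P Q → SC (.amb m P) (.amb m Q)
  | parC : SC P Q → SC (.par P R) (.par Q R)
  | resAmbC : SC P Q → SC (.resAmb m P) (.resAmb m Q)
  | resPortC : SC P Q → SC (.resPort l P) (.resPort l Q)
  | parComm (P Q) : SC (.par P Q) (.par Q P)
  | parAssoc (P Q R) : SC (.par (.par P Q) R) (.par P (.par Q R))
  | parZero (P) : SC (.par P .zero) P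
  | sumComm (P Q) : SC (.sum P Q) (.sum Q P)
  | sumAssoc (P Q R) : SC (.sum (.sum P Q) R) (.sum P (.sum Q R))
  | sumZero (P) : SC (.sum P .zero) P
  | scopePar : Sum.inl n ∉ Proc.fn P → SC (.resAmb n (.par P Q)) (.par P (.resAmb n Q))
  | scopeAmb : n.name ≠ m.name → SC (.resAmb n (.amb m P)) (.amb m (.resAmb n P))
  | resRes (n m P) : SC (.resAmb n (.resAmb m P)) (.resAmb m (.resAmb n P))
  | resZero (n) : SC (.resAmb n .zero) .zero
  | epsP (P) : SC (.cap .eps P) P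
  | capSeq (c c' P) : SC (.cap (.seq c c') P) (.cap c (.cap c' P))

/-- The reduction relation of CMC. -/
inductive Red : Proc → Proc → Prop
  | rin : Red (.par (.amb m (.par (.cap (.inn n) P) Q)) (.amb n R))
              (.amb n (.par (.amb m (.par P Q)) R))
  | rout : Red (.amb n (.par (.amb m (.par (.cap (.out n) P) Q)) R))
               (.par (.amb m (.par P Q)) (.amb n R))
  | rploc : Red (.amb m (.par (.amb n (.par (.cap (.ploc x) P) Q)) R))
                (.amb m (.par (.amb n (.par (P.subst x (.name m)) Q)) R))
  | rsloc : Red (.par (.amb m P) (.amb n (.par (.cap (.sloc x) Q) S)))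
                (.par (.amb m P) (.amb n (.par (Q.subst x (.name m)) S)))
  | parCtx : Red P P' → Red (.par P Q) (.par P' Q)
  | ambCtx : Red P P' → Red (.amb m P) (.amb m P')
  | resACtx : Red P P' → Red (.resAmb m P) (.resAmb m P')
  | resPCtx : Red P P' → Red (.resPort l P) (.resPort l P')
  | struct : SC P Q → Red Q Q' → SC Q' P' → Red P P'

/-- Transition labels of the CMC labelled transition system. -/
inductive Label where
  | inn : AmbName → Label
  | out : AmbName → Label
  | enter : AmbName → Label
  | move : AmbName → Label
  | exit : AmbName → Label
  | inp : ℕ → Cap → Label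
  | outp : ℕ → Cap → Label
  | tau : Label
  | ploc1 : ℕ → Label
  | plocL : ℕ → Label
  | sloc1 : ℕ → Label
  | slocL : ℕ → Label
  | ambL : AmbName → Label

def Label.fn : Label → Set (AmbName ⊕ ℕ)
  | .inn n => {Sum.inl n}
  | .out n => {Sum.inl n}
  | .enter n => {Sum.inl n}
  | .move n => {Sum.inl n}
  | .exit n => {Sum.inl n}
  | .ambL n => {Sum.inl n}
  | .inp a v => insert (Sum.inr a) v.fn
  | .outp a v => insert (Sum.inr a) v.fn
  | _ => ∅

/-- Outcomes: processes or concretions (ν m̃)⟨P⟩Q. -/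
inductive Outcome where
  | proc : Proc → Outcome
  | conc : List AmbName → Proc → Proc → Outcome

def Outcome.names : Outcome → List AmbName
  | .proc _ => []
  | .conc ms _ _ => ms

def Outcome.parR : Outcome → Proc → Outcome
  | .proc P, Q => .proc (.par P Q)
  | .conc ms P R, Q => .conc ms P (.par R Q)

open Classical in
noncomputable def Outcome.resA (u : AmbName) : Outcome → Outcome
  | .proc P => .proc (.resAmb u P)
  | .conc ms P Q => if Sum.inl u ∈ P.fn then .conc (u :: ms) P Q else .conc ms P (.resAmb u Q)

def Outcome.resP (l : ℕ) : Outcome → Outcome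
  | .proc P => .proc (.resPort l P)
  | .conc ms P Q => .conc ms P (.resPort l Q)

/-- Structural congruence lifted to outcomes. -/
inductive OutSC : Outcome → Outcome → Prop
  | proc : SC P Q → OutSC (.proc P) (.proc Q)
  | conc : SC P P' → SC Q Q' → OutSC (.conc ms P Q) (.conc ms P' Q')

/-- The labelled transition system of CMC. -/
inductive CTrans : Proc → Label → Outcome → Prop
  | actIn : CTrans (.cap (.inn n) P) (.inn n) (.proc P)
  | actOut : CTrans (.cap (.out n) P) (.out n) (.proc P)
  | enter : CTrans P (.inn n) (.proc P') →
      CTrans (.amb m P) (.enter n) (.conc [] (.amb m P') .zero)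
  | coEnter : CTrans (.amb n P) (.move n) (.conc [] P .zero)
  | tauIn : CTrans P (.enter n) (.conc ps P' P'') → CTrans Q (.move n) (.conc qs Q' Q'') →
      (∀ q ∈ qs, Sum.inl q ∉ P'.fn ∧ Sum.inl q ∉ P''.fn) →
      (∀ p ∈ ps, Sum.inl p ∉ Q'.fn ∧ Sum.inl p ∉ Q''.fn) →
      CTrans (.par P Q) .tau
        (.proc (resList ps (resList qs (.par (.amb n (.par P' Q')) (.par P'' Q'')))))
  | exit : CTrans P (.out n) (.proc P') →
      CTrans (.amb m P) (.exit n) (.conc [] (.amb m P') .zero)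
  | tauOut : CTrans P (.exit n) (.conc ms P' P'') →
      (∀ m∈ ms, Sum.inl m ∉ P'.fn ∧ Sum.inl m ∉ P''.fn) →
      CTrans (.amb n P) .tau (.proc (resList ms (.par P' (.amb n P''))))
  | lamPar : CTrans P l O → (∀ m ∈ O.names, Sum.inl m ∉ Q.fn) →
      CTrans (.par P Q) l (O.parR Q)
  | lamResA : CTrans P l O → Sum.inl u ∉ l.fn → CTrans (.resAmb u P) l (O.resA u)
  | lamResP : CTrans P l O → Sum.inr u ∉ l.fn → CTrans (.resPort u P) l (O.resP u)
  | tauAmb : CTrans P .tau (.proc P') → CTrans (.amb n P) .tau (.proc (.amb n P'))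
  | struct : SC P Q → CTrans Q l O → OutSC O O' → CTrans P l O'
  | inputR : CTrans (.input a z P) (.inp a v) (.proc (P.subst z v))
  | outputR : CTrans (.output a v P) (.outp a v) (.proc P)
  | tauPre : CTrans (.tauP P) .tau (.proc P)
  | sumL : CTrans P l O → CTrans (.sum P Q) l O
  | sumR : CTrans Q l O → CTrans (.sum P Q) l O
  | parCom : CTrans P (.inp a v) (.proc P') → CTrans Q (.outp a v) (.proc Q') →
      CTrans (.par P Q) .tau (.proc (.par P' Q'))
  | globalComI : CTrans P (.inp a v) (.proc P') → a ∈ m.ports →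
      CTrans (.amb m P) (.inp a v) (.proc (.amb m P'))
  | globalComO : CTrans P (.outp a v) (.proc P') → a ∈ m.ports →
      CTrans (.amb m P) (.outp a v) (.proc (.amb m P'))
  | actPloc : z ∉ P.vars → CTrans (.cap (.ploc x) P) (.plocL z) (.proc (P.subst x (.var z)))
  | plocAmb : CTrans P (.plocL z) (.proc P') → CTrans (.amb n P) (.plocL z) (.proc (.amb n P'))
  | plocPar : CTrans P (.plocL z) (.proc P') → z ∉ Q.vars →
      CTrans (.par P Q) (.plocL z) (.proc (.par P' Q))
  | ploc1 : CTrans (.amb n P) (.ploc1 z) (.conc [] (.amb n P) .zero)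
  | tauPloc : CTrans P (.ploc1 z) (.conc ps P' Q) → CTrans P' (.plocL z) (.proc P'') →
      CTrans (.amb m P) .tau (.proc (resList ps (.amb m (.par (P''.subst z (.name m)) Q))))
  | actSloc : z ∉ P.vars → CTrans (.cap (.sloc x) P) (.slocL z) (.proc (P.subst x (.var z)))
  | slocAmb : CTrans P (.slocL z) (.proc P') → CTrans (.amb n P) (.slocL z) (.proc (.amb n P'))
  | slocPar : CTrans P (.slocL z) (.proc P') → z ∉ Q.vars →
      CTrans (.par P Q) (.slocL z) (.proc (.par P' Q))
  | sloc1 : CTrans (.amb n P) (.sloc1 z) (.conc [] (.amb n P) .zero)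
  | sibAmb : CTrans (.amb n P) (.ambL n) (.proc P)
  | parAmb : CTrans P (.ambL n) (.proc P') → CTrans (.par P Q) (.ambL n) (.proc P')
  | tauSloc : CTrans P (.sloc1 z) (.conc ps P' P''') → CTrans P' (.slocL z) (.proc P'') →
      CTrans Q (.ambL n) (.proc Q') →
      CTrans (.par P Q) .tau (.proc (.par (resList ps (.par (P''.subst z (.name n)) P''')) Q))

def TauStep (P Q : Proc) : Prop := CTrans P .tau (.proc Q)

def TauStar : Proc → Proc → Prop := Relation.ReflTransGen TauStep

/-- Weak transition ⇒α̂⇒ for a visible action α. -/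
def WeakAct (l : Label) (P Q : Proc) : Prop :=
  ∃ P1 P2, TauStar P P1 ∧ CTrans P1 l (.proc P2) ∧ TauStar P2 Q

/-- Barb P↓ₙ : P exhibits ambient n at top level. -/
def Barb (P : Proc) (n : AmbName) : Prop :=
  ∃ ms P1 P2, n ∉ ms ∧ SC P (resList ms (.par (.amb n P1) P2))

def WeakBarb (P : Proc) (n : AmbName) : Prop := ∃ Q, TauStar P Q ∧ Barb Q n

/-- The actions matched in barbed bisimulations: a(z), ā(z), in m, out m. -/
def IsBAct : Label → Prop
  | .inp _ _ => True
  | .outp _ _ => True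
  | .inn _ => True
  | .out _ => True
  | _ => False

/-- Barbed bisimulation. -/
def IsBisim (S : Proc → Proc → Prop) : Prop :=
  Symmetric S ∧ ∀ P Q, S P Q →
    (∀ l P', IsBAct l → CTrans P l (.proc P') → ∃ Q', WeakAct l Q Q' ∧ S P' Q') ∧
    (∀ n, Barb P n → WeakBarb Q n)

/-- Barbed bisimilarity: the union of all barbed bisimulations. -/
def Bisim (P Q : Proc) : Prop := ∃ S, IsBisim S ∧ S P Q

/-- Capability barb P↓_β. -/
def CapBarb (P : Proc) (b : Label) : Prop := ∃ O, CTrans P b O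

def WeakCapBarb (P : Proc) (b : Label) : Prop := ∃ P', TauStar P P' ∧ CapBarb P' b

/-- β-barbed bisimulation. -/
def IsCapBisim (b : Label) (S : Proc → Proc → Prop) : Prop :=
  Symmetric S ∧ ∀ P Q, S P Q →
    (∀ l P', IsBAct l → CTrans P l (.proc P') → ∃ Q', WeakAct l Q Q' ∧ S P' Q') ∧
    (CapBarb P b → WeakCapBarb Q b)

def CapBisim (b : Label) (P Q : Proc) : Prop := ∃ S, IsCapBisim b S ∧ S P Q

/-- Contexts: processes with holes. -/
inductive Ctx where
  | hole : Ctx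
  | zero : Ctx
  | cap : Cap → Ctx → Ctx
  | input : ℕ → ℕ → Ctx → Ctx
  | output : ℕ → Cap → Ctx → Ctx
  | tauP : Ctx → Ctx
  | amb : AmbName → Ctx → Ctx
  | sum : Ctx → Ctx → Ctx
  | par : Ctx → Ctx → Ctx
  | resAmb : AmbName → Ctx → Ctx
  | resPort : ℕ → Ctx → Ctx
  | procC : Proc → Ctx

def Ctx.fill : Ctx → Proc → Proc
  | .hole, P => P
  | .zero, _ => .zero
  | .cap c C, P => .cap c (C.fill P)
  | .input a z C, P => .input a z (C.fill P)
  | .output a v C, P => .output a v (C.fill P)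
  | .tauP C, P => .tauP (C.fill P)
  | .amb m C, P => .amb m (C.fill P)
  | .sum C D, P => .sum (C.fill P) (D.fill P)
  | .par C D, P => .par (C.fill P) (D.fill P)
  | .resAmb m C, P => .resAmb m (C.fill P)
  | .resPort l C, P => .resPort l (C.fill P)
  | .procC Q, _ => Q

/-- Barbed congruence. -/
def Cong (P Q : Proc) : Prop := ∀ C : Ctx, Bisim (C.fill P) (C.fill Q)

/-- β-barbed congruence. -/
def CapCong (b : Label) (P Q : Proc) : Prop := ∀ C : Ctx, CapBisim b (C.fill P) (C.fill Q)

def Cap.basic : Cap → Prop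
  | .ploc _ => False
  | .sloc _ => False
  | .seq c1 c2 => c1.basic ∧ c2.basic
  | _ => True

/-- The sub-calculus T' of CMC_b: no action prefixing, no choice, no
relabelling (and only the CMC_b capabilities). -/
def Proc.inT' : Proc → Prop
  | .zero => True
  | .cap c P => c.basic ∧ P.inT'
  | .input _ _ _ => False
  | .output _ _ _ => False
  | .tauP _ => False
  | .sum _ _ => False
  | .amb _ P => P.inT'
  | .par P Q => P.inT' ∧ Q.inT'
  | .resAmb _ P => P.inT'
  | .resPort _ P => P.inT'

/-- The sub-calculus T''' of CMC: no action prefixing, no choice, no relabelling. -/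
def Proc.inT3 : Proc → Prop
  | .zero => True
  | .cap _ P => P.inT3
  | .input _ _ _ => False
  | .output _ _ _ => False
  | .tauP _ => False
  | .sum _ _ => False
  | .amb _ P => P.inT3
  | .par P Q => P.inT3 ∧ Q.inT3
  | .resAmb _ P => P.inT3
  | .resPort _ P => P.inT3

/-- The context C₁[·] = ν m_A([·]) | ν a (k_C[in n_B.out n_B.ā.0] | a.m_A[P]). -/
def C1 (m k n : AmbName) (a : ℕ) (P R : Proc) : Proc :=
  .par (.resAmb m R)
    (.resPort a (.par (.amb k (.cap (.inn n) (.cap (.out n) (.output a .eps .zero))))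
                      (.input a 0 (.amb m P))))

/-! The τ-Ploc rule is applied to m_A with the concretion ⟨n_B[ploc(x).P₁ | P₂]⟩(0 | Q) given by
Ploc1 and λ-Par, and the inner move ploc(z) with z fresh. Since z occurs nowhere else,
P₁{x ← z}{z ← m_A} = P₁{x ← m_A} and P₂{z ← m_A} = P₂, and the leftover 0 | Q is
structurally congruent to Q. -/

theorem Cap.subst_of_notMem_vars {c : Cap} {z : ℕ} (v : Cap) (h : z ∉ c.vars) :
    c.subst z v = c := by
  induction c with
  | var y => simp_all [Cap.subst, Cap.vars, Ne.symm h]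
  | _ => simp_all [Cap.subst, Cap.vars]

theorem Proc.subst_of_notMem_vars {P : Proc} {z : ℕ} (v : Cap) (h : z ∉ P.vars) :
    P.subst z v = P := by
  induction P <;> simp_all [Proc.subst, Proc.vars, Cap.subst_of_notMem_vars]

theorem Cap.subst_var_subst {c : Cap} (x : ℕ) {z : ℕ} (v : Cap) (h : z ∉ c.vars) :
    (c.subst x (.var z)).subst z v = c.subst x v := by
  induction c with
  | var y => by_cases hy : y = x <;> simp_all [Cap.subst, Cap.vars, Ne.symm h]
  | _ => simp_all [Cap.subst, Cap.vars]

theorem Proc.subst_var_subst {P : Proc} (x : ℕ) {z : ℕ} (v : Cap) (h : z ∉ P.vars) :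
    (P.subst x (.var z)).subst z v = P.subst x v := by
  induction P with
  | input a w P ih =>
    by_cases hw : w = x <;>
      simp_all [Proc.subst, Proc.vars, eq_comm, Proc.subst_of_notMem_vars]
  | _ => simp_all [Proc.subst, Proc.vars, Cap.subst_var_subst]

theorem SC.parR {P Q Q' : Proc} (h : SC Q Q') : SC (.par P Q) (.par P Q') :=
  (SC.parComm P Q).trans ((SC.parC h).trans (SC.parComm Q' P))

theorem SC.zeroPar (P : Proc) : SC (.par .zero P) P :=
  (SC.parComm .zero P).trans (SC.parZero P)

theorem CTrans.ploc1_par (n : AmbName) (z : ℕ) (P Q : Proc) :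
    CTrans (.par (.amb n P) Q) (.ploc1 z) (.conc [] (.amb n P) (.par .zero Q)) :=
  CTrans.lamPar (O := .conc [] (.amb n P) .zero) CTrans.ploc1 (by simp [Outcome.names])

theorem CTrans.plocL_amb_ploc_par (n : AmbName) (x : ℕ) {z : ℕ} {P1 P2 : Proc}
    (h1 : z ∉ P1.vars) (h2 : z ∉ P2.vars) :
    CTrans (.amb n (.par (.cap (.ploc x) P1) P2)) (.plocL z)
      (.proc (.amb n (.par (P1.subst x (.var z)) P2))) :=
  CTrans.plocAmb (CTrans.plocPar (CTrans.actPloc h1) h2)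

theorem red_ploc_derivable_general (m n : AmbName) (x z : ℕ) (P1 P2 Q : Proc)
    (h1 : z ∉ P1.vars) (h2 : z ∉ P2.vars) :
    CTrans (.amb m (.par (.amb n (.par (.cap (.ploc x) P1) P2)) Q)) .tau
      (.proc (.amb m (.par (.amb n (.par (P1.subst x (.name m)) P2)) Q))) := by
  have h := CTrans.tauPloc (m := m) (CTrans.ploc1_par n z _ Q)
    (CTrans.plocL_amb_ploc_par n x h1 h2)
  simp only [resList, List.foldr, Proc.subst, Proc.subst_var_subst x _ h1,
    Proc.subst_of_notMem_vars _ h2] at h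
  exact CTrans.struct (SC.refl _) h (OutSC.proc (SC.ambC (SC.parR (SC.zeroPar Q))))

theorem red_ploc_derivable (m n : AmbName) (x z : ℕ) (P1 P2 Q : Proc)
    (h1 : z ∉ P1.vars) (h2 : z ∉ P2.vars) (h3 : z ∉ Q.vars) :
    CTrans (.amb m (.par (.amb n (.par (.cap (.ploc x) P1) P2)) Q)) .tau
      (.proc (.amb m (.par (.amb n (.par (P1.subst x (.name m)) P2)) Q))) :=
  red_ploc_derivable_general m n x z P1 P2 Q h1 h2
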